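/- arXiv:1508.06345 — 3 statements merged into one kernel-verified Lean document; each statement's English description precedes it below -/
import Mathlib

section
/- For P, Q ∈ I with P ⊊ Q one has strict subduction P ⊂_S Q (that is, P ⊆_S Q but not Q ⊆_S P). Moreover, for non-singleton P, Q ∈ I, strict subduction P ⊂_S Q implies h(P) < h(Q); in particular, if P ⊊ Q with P non-singleton, then h(P) < h(Q). -/
namespace Holonomy

variable {X : Type*}

/-- The extended image set `I = {X·s : s ∈ S} ∪ {X} ∪ {{x} : x ∈ X}`,
with the state set taken to be `Set.univ`. -/
def extImgs (S : Set (X → X)) : Set (Set X) :=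
  {P : Set X | ∃ s ∈ S, P = s '' (Set.univ : Set X)} ∪ {(Set.univ : Set X)} ∪
    {P : Set X | ∃ x : X, P = {x}}

/-- `C` is a maximal chain (w.r.t. inclusion) inside the family `I`. -/
def IsMaxChainIn (I : Set (Set X)) (C : Set (Set X)) : Prop :=
  C ⊆ I ∧ IsChain (· ⊆ ·) C ∧
    ∀ D : Set (Set X), D ⊆ I → IsChain (· ⊆ ·) D → C ⊆ D → D = C

/-- `𝒞`, the maximal chains in the extended image set. -/
def MaxChain (S : Set (X → X)) : Type _ :=
  {C : Set (Set X) // IsMaxChainIn (extImgs S) C}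

/-- The action of `s` on a chain, `C·s = {P·s : P ∈ C}`. -/
def chainAct (C : Set (Set X)) (s : X → X) : Set (Set X) :=
  (fun P => s '' P) '' C

/-- Chains `C` and `D` agree down to `P`. -/
def AgreeDownTo (C D : Set (Set X)) (P : Set X) : Prop :=
  P ∈ C ∧ P ∈ D ∧ ∀ Q : Set X, P ⊆ Q → (Q ∈ C ↔ Q ∈ D)

/-- `sh : 𝒞 → 𝒞` is a lift of `s`: `C·s ⊆ sh C` for every maximal chain `C`. -/
def IsLift (S : Set (X → X)) (s : X → X) (sh : MaxChain S → MaxChain S) : Prop :=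
  ∀ C : MaxChain S, chainAct C.val s ⊆ (sh C).val

/-- `sh` is consistent with chain structure. -/
def Consistent (S : Set (X → X)) (s : X → X) (sh : MaxChain S → MaxChain S) : Prop :=
  ∀ (C C' : MaxChain S) (P : Set X),
    AgreeDownTo C.val C'.val P → AgreeDownTo (sh C).val (sh C').val (s '' P)

/-- Product of a list of transformations, in left-to-right (right-action) order:
`prodList [a₁,…,a_k] = a₁⋯a_k`, i.e. `x ↦ a_k (⋯ (a₁ x))`. -/
def prodList {α : Type*} (l : List (α → α)) : α → α :=
  fun x => l.foldl (fun y f => f y) x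

/-- Subduction: `P ⊆_S Q` iff `P ⊆ Q·s` for some `s ∈ S¹ = S ∪ {id}`. -/
def Subduction (S : Set (X → X)) (P Q : Set X) : Prop :=
  ∃ s ∈ insert (id : X → X) S, P ⊆ s '' Q

/-- `P ≡_S Q`. -/
def SubEquiv (S : Set (X → X)) (P Q : Set X) : Prop :=
  Subduction S P Q ∧ Subduction S Q P

/-- Strict subduction `P ⊂_S Q`. -/
def SSubduction (S : Set (X → X)) (P Q : Set X) : Prop :=
  Subduction S P Q ∧ ¬ Subduction S Q P

/-- `P` is not a singleton. -/
def nonSingleton (P : Set X) : Prop := ¬ ∃ x : X, P = {x}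

/-- The height of `Q`: the largest length of a strict subduction chain of
non-singleton members of `I` ending at `Q` (`0` for singletons, since then no
such chain exists). -/
noncomputable def height (S : Set (X → X)) (Q : Set X) : ℕ :=
  sSup {n : ℕ | ∃ l : List (Set X), l.length = n ∧
    (∀ R ∈ l, R ∈ extImgs S ∧ nonSingleton R) ∧
    l.Chain' (SSubduction S) ∧ l.getLast? = some Q}

/-- Depth: `d(Q) = h(X) - h(Q) + 1`. -/
noncomputable def depth (S : Set (X → X)) (Q : Set X) : ℕ :=
  height S (Set.univ : Set X) - height S Q + 1

/-- The tiles of `P`: maximal elements (w.r.t. inclusion) of `{Q ∈ I : Q ⊊ P}`. -/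
def tiles (S : Set (X → X)) (P : Set X) : Set (Set X) :=
  {Q | (Q ∈ extImgs S ∧ Q ⊂ P) ∧ ∀ R : Set X, R ∈ extImgs S → R ⊂ P → Q ⊆ R → Q = R}

/-- The permutator group `G_P` of `P`, as a set of permutations of `P`. -/
def permutator (S : Set (X → X)) (P : Set X) : Set (Equiv.Perm ↥P) :=
  {σ | ∃ s ∈ S, s '' P = P ∧ ∀ p : ↥P, (σ p : X) = s (p : X)}

/-- The holonomy group `H_P` of `P`, as a set of permutations of `tiles P`. -/
def holonomyGroup (S : Set (X → X)) (P : Set X) : Set (Equiv.Perm ↥(tiles S P)) :=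
  {σ | ∃ s ∈ S, s '' P = P ∧ ∀ T : ↥(tiles S P), ((σ T : Set X) : Set X) = s '' ((T : Set X) : Set X)}



/-- The state of approximation at level `i` of the positioned chain of a maximal
chain `C`: `α_1 = X`, and for `i > 1`, `α_i` is the entry of the positioned chain
at the largest filled position `j < i`.  Since position `d(P)` of the positioned
chain of `C : X = P₁ ⊋ ⋯ ⊋ P_k` holds the successor of `P` for each non-minimal
member `P`, `α_i` is the smallest member of `C` whose immediate predecessor in
`C` has depth `< i`. -/
noncomputable def alpha (S : Set (X → X)) (C : Set (Set X)) (i : ℕ) : Set X :=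
  if i ≤ 1 then Set.univ
  else ⋂₀ {Q | Q ∈ C ∧ ∀ P : Set X,
    (P ∈ C ∧ Q ⊂ P ∧ ∀ R ∈ C, Q ⊂ R → P ⊆ R) → depth S P < i}

/-- The chosen equivalence-class representatives of depth `i`. -/
def RepsAt (S : Set (X → X)) (rep : Set X → Set X) (i : ℕ) : Set (Set X) :=
  {R | R ∈ extImgs S ∧ nonSingleton R ∧ rep R = R ∧ depth S R = i}

/-- States of the `i`-th holonomy component `ℋ_i`:
`none` is the extra state `*`, and `some (R, T)` is the tile `T` in the copy of
`tiles(R)` in the disjoint union, for `R` a representative of depth `i`. -/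
def ValidAt (S : Set (X → X)) (rep : Set X → Set X) (i : ℕ)
    (t : Option (Set X × Set X)) : Prop :=
  t = none ∨ ∃ R T : Set X, t = some (R, T) ∧ R ∈ RepsAt S rep i ∧ T ∈ tiles S R

/-- Transformations of the `i`-th holonomy component `ℋ_i` (on its state set):
either a constant map to a state of `ℋ_i`, or an element `(h₁,…,h_k)` of
`H_{R₁} × ⋯ × H_{R_k}` acting on the copy of `tiles(R_j)` by `h_j` (that is, by
`T ↦ T·s` for some `s` stabilizing `R_j`) and fixing `*`. -/
def IsHolTrans (S : Set (X → X)) (rep : Set X → Set X) (i : ℕ)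
    (φ : Option (Set X × Set X) → Option (Set X × Set X)) : Prop :=
  (∃ t₀, ValidAt S rep i t₀ ∧ ∀ t, ValidAt S rep i t → φ t = t₀) ∨
  (φ none = none ∧ ∀ R ∈ RepsAt S rep i, ∃ s ∈ S, s '' R = R ∧
    ∀ T ∈ tiles S R, φ (some (R, T)) = some (R, s '' T))

/-- `F` is an element of the wreath product `ℋ₁ ≀ ⋯ ≀ ℋ_d` of the holonomy
components: the action on each coordinate `i` depends only on the coordinates
above it (through a dependency function), and on every valid state this
component action is a transformation of `ℋ_i`. -/
def IsCascade (S : Set (X → X)) (rep : Set X → Set X) (d : ℕ)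
    (F : (Fin d → Option (Set X × Set X)) → (Fin d → Option (Set X × Set X))) : Prop :=
  ∀ i : Fin d, ∃ g : (Fin d → Option (Set X × Set X)) →
      (Option (Set X × Set X) → Option (Set X × Set X)),
    (∀ t, F t i = g t (t i)) ∧
    (∀ t t', (∀ j : Fin d, j < i → t j = t' j) → g t = g t') ∧
    (∀ t, (∀ j : Fin d, ValidAt S rep (j.val + 1) (t j)) →
      IsHolTrans S rep (i.val + 1) (g t))

/-! A chain of strict subductions is pairwise strict, because subduction is transitive when `S` is
closed under composition; so its members are distinct and its length is bounded by the number of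
subsets of the finite set `X`. Hence the height is attained by some chain, and a chain ending at `P`
extends by `Q` whenever `P ⊂_S Q`. A proper subset `P ⊊ Q` cannot cover `Q` by an image `P·s`,
which has at most `|P| < |Q|` elements. -/

theorem Subduction.refl (S : Set (X → X)) (P : Set X) : Subduction S P P :=
  ⟨id, Set.mem_insert _ _, by simp⟩

theorem Subduction.trans {S : Set (X → X)} (hS : ∀ s ∈ S, ∀ t ∈ S, (fun x => t (s x)) ∈ S)
    {P Q R : Set X} (hPQ : Subduction S P Q) (hQR : Subduction S Q R) : Subduction S P R := by
  obtain ⟨s, hs, hPs⟩ := hPQ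
  obtain ⟨t, ht, hQt⟩ := hQR
  have hPts : P ⊆ (s ∘ t) '' R := hPs.trans <| (Set.image_mono hQt).trans (Set.image_comp s t R).ge
  refine ⟨s ∘ t, ?_, hPts⟩
  rcases hs with rfl | hs
  · exact ht
  rcases ht with rfl | ht
  · exact Set.mem_insert_of_mem _ hs
  · exact Set.mem_insert_of_mem _ (hS t ht s hs)

theorem SSubduction.trans {S : Set (X → X)} (hS : ∀ s ∈ S, ∀ t ∈ S, (fun x => t (s x)) ∈ S)
    {P Q R : Set X} (hPQ : SSubduction S P Q) (hQR : SSubduction S Q R) : SSubduction S P R :=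
  ⟨hPQ.1.trans hS hQR.1, fun hRP => hQR.2 (hRP.trans hS hPQ.1)⟩

theorem SSubduction.irrefl (S : Set (X → X)) (P : Set X) : ¬ SSubduction S P P :=
  fun h => h.2 h.1

theorem ssubduction_of_ssubset (S : Set (X → X)) {P Q : Set X} (hQ : Q.Finite) (hPQ : P ⊂ Q) :
    SSubduction S P Q := by
  refine ⟨⟨id, Set.mem_insert _ _, by simpa using hPQ.subset⟩, ?_⟩
  rintro ⟨s, -, hQs⟩
  have hP : P.Finite := hQ.subset hPQ.subset
  have : Q.ncard < Q.ncard :=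
    calc Q.ncard ≤ (s '' P).ncard := Set.ncard_le_ncard hQs (hP.image s)
      _ ≤ P.ncard := Set.ncard_image_le hP
      _ < Q.ncard := Set.ncard_lt_ncard hPQ hQ
  exact this.false

theorem nonempty_of_mem_extImgs [Nonempty X] {S : Set (X → X)} {P : Set X}
    (hP : P ∈ extImgs S) : P.Nonempty := by
  rcases hP with (⟨s, -, rfl⟩ | rfl) | ⟨x, rfl⟩
  · exact Set.univ_nonempty.image s
  · exact Set.univ_nonempty
  · exact Set.singleton_nonempty x

theorem nonSingleton_of_ssubset [Nonempty X] {S : Set (X → X)} {P Q : Set X}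
    (hP : P ∈ extImgs S) (hPQ : P ⊂ Q) : nonSingleton Q := by
  rintro ⟨x, rfl⟩
  exact (nonempty_of_mem_extImgs hP).ne_empty (Set.ssubset_singleton_iff.1 hPQ)

def IsHeightChain (S : Set (X → X)) (Q : Set X) (l : List (Set X)) : Prop :=
  (∀ R ∈ l, R ∈ extImgs S ∧ nonSingleton R) ∧ l.IsChain (SSubduction S) ∧ l.getLast? = some Q

theorem IsHeightChain.append_singleton {S : Set (X → X)} {P Q : Set X} {l : List (Set X)}
    (hl : IsHeightChain S P l) (hQ : Q ∈ extImgs S) (hQ' : nonSingleton Q)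
    (hPQ : SSubduction S P Q) : IsHeightChain S Q (l ++ [Q]) := by
  obtain ⟨hmem, hchain, hlast⟩ := hl
  refine ⟨?_, hchain.append (List.isChain_singleton Q) ?_, by simp⟩
  · simp only [List.mem_append, List.mem_singleton]
    rintro R (hR | rfl)
    exacts [hmem R hR, ⟨hQ, hQ'⟩]
  · simp [hlast, hPQ]

theorem length_le_card_of_isChain_ssubduction [Fintype X] {S : Set (X → X)}
    (hS : ∀ s ∈ S, ∀ t ∈ S, (fun x => t (s x)) ∈ S) {l : List (Set X)}
    (hl : l.IsChain (SSubduction S)) : l.length ≤ Fintype.card (Set X) := by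
  have : Trans (SSubduction S) (SSubduction S) (SSubduction S) := ⟨SSubduction.trans hS⟩
  have : Std.Irrefl (SSubduction S) := ⟨SSubduction.irrefl S⟩
  exact (List.isChain_iff_pairwise.1 hl).nodup.length_le_card

theorem bddAbove_height_lengths [Fintype X] {S : Set (X → X)}
    (hS : ∀ s ∈ S, ∀ t ∈ S, (fun x => t (s x)) ∈ S) (Q : Set X) :
    BddAbove {n : ℕ | ∃ l : List (Set X), l.length = n ∧ IsHeightChain S Q l} :=
  ⟨_, fun _ ⟨_, hn, hl⟩ => hn ▸ length_le_card_of_isChain_ssubduction hS hl.2.1⟩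

theorem IsHeightChain.length_le_height [Fintype X] {S : Set (X → X)}
    (hS : ∀ s ∈ S, ∀ t ∈ S, (fun x => t (s x)) ∈ S) {Q : Set X} {l : List (Set X)}
    (hl : IsHeightChain S Q l) : l.length ≤ height S Q :=
  le_csSup (bddAbove_height_lengths hS Q) ⟨l, rfl, hl⟩

theorem exists_isHeightChain_length_eq_height [Fintype X] {S : Set (X → X)}
    (hS : ∀ s ∈ S, ∀ t ∈ S, (fun x => t (s x)) ∈ S) {Q : Set X} (hQ : Q ∈ extImgs S)
    (hQ' : nonSingleton Q) : ∃ l : List (Set X), l.length = height S Q ∧ IsHeightChain S Q l :=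
  Nat.sSup_mem (s := {n : ℕ | ∃ l : List (Set X), l.length = n ∧ IsHeightChain S Q l})
    ⟨1, [Q], rfl, by simp [hQ, hQ'], List.isChain_singleton Q, rfl⟩ (bddAbove_height_lengths hS Q)

theorem height_lt_height_of_ssubduction [Fintype X] {S : Set (X → X)}
    (hS : ∀ s ∈ S, ∀ t ∈ S, (fun x => t (s x)) ∈ S) {P Q : Set X} (hP : P ∈ extImgs S)
    (hQ : Q ∈ extImgs S) (hP' : nonSingleton P) (hQ' : nonSingleton Q)
    (hPQ : SSubduction S P Q) : height S P < height S Q := by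
  obtain ⟨l, hlen, hl⟩ := exists_isHeightChain_length_eq_height hS hP hP'
  have := (hl.append_singleton hQ hQ' hPQ).length_le_height hS
  simp only [List.length_append, List.length_singleton, hlen] at this
  omega

/-- strict inclusion of members of `I` implies strict subduction,
and strict subduction of non-singletons strictly increases height. -/
theorem ssubduction_and_height {X : Type*} [Fintype X] [Nonempty X]
    (S : Set (X → X)) (hS : ∀ s ∈ S, ∀ t ∈ S, (fun x => t (s x)) ∈ S) :
    (∀ P Q : Set X, P ∈ extImgs S → Q ∈ extImgs S → P ⊂ Q → SSubduction S P Q) ∧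
    (∀ P Q : Set X, P ∈ extImgs S → Q ∈ extImgs S → nonSingleton P →
      nonSingleton Q → SSubduction S P Q → height S P < height S Q) ∧
    (∀ P Q : Set X, P ∈ extImgs S → Q ∈ extImgs S → nonSingleton P →
      P ⊂ Q → height S P < height S Q) :=
  ⟨fun _ Q _ _ hPQ => ssubduction_of_ssubset S Q.toFinite hPQ,
    fun _ _ hP hQ hP' hQ' hPQ => height_lt_height_of_ssubduction hS hP hQ hP' hQ' hPQ,
    fun _ Q hP hQ hP' hPQ => height_lt_height_of_ssubduction hS hP hQ hP'
      (nonSingleton_of_ssubset hP hPQ) (ssubduction_of_ssubset S Q.toFinite hPQ)⟩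

end Holonomy
end

section
/- If c ∈ S is a constant map (there is x₀ ∈ X with x·c = x₀ for all x ∈ X) and ĉ : 𝒞 → 𝒞 is a lift of c consistent with chain structure, then ĉ is a constant map on maximal chains: ĉ(C) = ĉ(C') for all maximal chains C, C' ∈ 𝒞. -/
namespace Holonomy

variable {X : Type*}

/-!
Any two maximal chains contain `X` and so agree down to `X`; by consistency their images under
`ĉ` agree down to `X·c = {x₀}`. Members of a maximal chain are nonempty, so a singleton in it
lies below every member, and chains agreeing down to it coincide.
-/

section

variable {S : Set (X → X)}

lemma univ_mem_extImgs : (Set.univ : Set X) ∈ extImgs S :=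
  Or.inl (Or.inr rfl)

lemma nonempty_of_mem_extImgs_s15 [Nonempty X] {Q : Set X} (hQ : Q ∈ extImgs S) :
    Q.Nonempty := by
  rcases hQ with (⟨s, _, rfl⟩ | rfl) | ⟨x, rfl⟩
  · exact Set.univ_nonempty.image s
  · exact Set.univ_nonempty
  · exact Set.singleton_nonempty x

lemma IsMaxChainIn.univ_mem {I : Set (Set X)} {C : Set (Set X)} (hC : IsMaxChainIn I C)
    (hI : Set.univ ∈ I) : Set.univ ∈ C := by
  obtain ⟨hCI, hchain, hmax⟩ := hC
  have hins : insert Set.univ C = C :=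
    hmax _ (Set.insert_subset hI hCI)
      (hchain.insert fun P _ _ => Or.inr (Set.subset_univ P)) (Set.subset_insert _ _)
  exact hins ▸ Set.mem_insert _ _

lemma MaxChain.univ_mem (C : MaxChain S) : Set.univ ∈ C.val :=
  C.2.univ_mem univ_mem_extImgs

lemma agreeDownTo_univ {C D : Set (Set X)} (hC : Set.univ ∈ C) (hD : Set.univ ∈ D) :
    AgreeDownTo C D Set.univ :=
  ⟨hC, hD, fun Q hQ => by simp [Set.univ_subset_iff.mp hQ, hC, hD]⟩

lemma singleton_subset_of_isChain {C : Set (Set X)} (hC : IsChain (· ⊆ ·) C) {x : X}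
    (hx : {x} ∈ C) {Q : Set X} (hQ : Q ∈ C) (hQne : Q.Nonempty) : {x} ⊆ Q := by
  rcases hC.total hx hQ with h | h
  · exact h
  · obtain ⟨y, hy⟩ := hQne
    rwa [Set.singleton_subset_iff, ← Set.mem_singleton_iff.mp (h hy)]

lemma eq_of_agreeDownTo_singleton {C D : Set (Set X)} (hC : IsChain (· ⊆ ·) C)
    (hD : IsChain (· ⊆ ·) D) (hCne : ∀ Q ∈ C, Q.Nonempty) (hDne : ∀ Q ∈ D, Q.Nonempty)
    {x : X} (h : AgreeDownTo C D {x}) : C = D := by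
  obtain ⟨hxC, hxD, hagree⟩ := h
  ext Q
  constructor
  · exact fun hQ => (hagree Q (singleton_subset_of_isChain hC hxC hQ (hCne Q hQ))).mp hQ
  · exact fun hQ => (hagree Q (singleton_subset_of_isChain hD hxD hQ (hDne Q hQ))).mpr hQ

lemma MaxChain.eq_of_agreeDownTo_singleton {C D : MaxChain S} {x : X}
    (h : AgreeDownTo C.val D.val {x}) : C = D :=
  have : Nonempty X := ⟨x⟩
  Subtype.ext <| Holonomy.eq_of_agreeDownTo_singleton C.2.2.1 D.2.2.1
    (fun _ hQ => nonempty_of_mem_extImgs_s15 (C.2.1 hQ))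
    (fun _ hQ => nonempty_of_mem_extImgs_s15 (D.2.1 hQ)) h

end

theorem lift_of_constant_is_constant_general {X : Type*}
    (S : Set (X → X))
    (c : X → X) (x₀ : X) (hconst : ∀ x : X, c x = x₀)
    (ch : MaxChain S → MaxChain S)
    (hcons : Consistent S c ch) :
    ∀ C C' : MaxChain S, ch C = ch C' := by
  intro C C'
  have himg : c '' Set.univ = {x₀} :=
    Set.eq_singleton_iff_unique_mem.mpr
      ⟨⟨x₀, Set.mem_univ _, hconst x₀⟩, fun _ ⟨x, _, hx⟩ => hx ▸ hconst x⟩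
  apply MaxChain.eq_of_agreeDownTo_singleton (x := x₀)
  rw [← himg]
  exact hcons C C' _ (agreeDownTo_univ C.univ_mem C'.univ_mem)

/-- a consistent lift of a constant map is a constant map on
maximal chains. -/
theorem lift_of_constant_is_constant {X : Type*} [Fintype X] [Nonempty X]
    (S : Set (X → X)) (hS : ∀ s ∈ S, ∀ t ∈ S, (fun x => t (s x)) ∈ S)
    (c : X → X) (hc : c ∈ S) (x₀ : X) (hconst : ∀ x : X, c x = x₀)
    (ch : MaxChain S → MaxChain S)
    (hlift : IsLift S c ch) (hcons : Consistent S c ch) :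
    ∀ C C' : MaxChain S, ch C = ch C' :=
  lift_of_constant_is_constant_general S c x₀ hconst ch hcons

end Holonomy
end

section
/- For every maximal chain C and every level 1 ≤ i ≤ h(X), the depth of the state of approximation satisfies d(α_i(C^pos)) ≥ i. -/
namespace Holonomy

variable {X : Type*}

section Helpers

lemma chain_exists_least {α : Type*} [PartialOrder α] {s : Set α} (hfin : s.Finite)
    (hchain : IsChain (· ≤ ·) s) (hne : s.Nonempty) : ∃ m ∈ s, ∀ b ∈ s, m ≤ b := by
  obtain ⟨m, hm, hmin⟩ := Set.Finite.exists_minimalFor id s hfin hne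
  refine ⟨m, hm, fun b hb => ?_⟩
  rcases eq_or_ne m b with rfl | h
  · exact le_refl _
  · rcases hchain hm hb h with h1 | h1
    · exact h1
    · exact hmin hb h1

lemma chain_exists_greatest {α : Type*} [PartialOrder α] {s : Set α} (hfin : s.Finite)
    (hchain : IsChain (· ≤ ·) s) (hne : s.Nonempty) : ∃ m ∈ s, ∀ b ∈ s, b ≤ m := by
  obtain ⟨m, hm, hmax⟩ := Set.Finite.exists_maximalFor id s hfin hne
  refine ⟨m, hm, fun b hb => ?_⟩
  rcases eq_or_ne m b with rfl | h
  · exact le_refl _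
  · rcases hchain hm hb h with h1 | h1
    · exact hmax hb h1
    · exact h1

lemma mem_extImgs_nonempty {X : Type*} [Nonempty X] {S : Set (X → X)} {Q : Set X}
    (hQ : Q ∈ extImgs S) : Q.Nonempty := by
  rcases hQ with (⟨s, _, rfl⟩ | hQ) | ⟨x, rfl⟩
  · exact (Set.univ_nonempty).image s
  · simp only [Set.mem_singleton_iff] at hQ
    subst hQ; exact Set.univ_nonempty
  · exact ⟨x, rfl⟩

lemma univ_mem_maxchain {X : Type*} {S : Set (X → X)} {C : Set (Set X)}
    (hC : IsMaxChainIn (extImgs S) C) : (Set.univ : Set X) ∈ C := by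
  obtain ⟨hsub, hchain, hmax⟩ := hC
  have hD : insert (Set.univ : Set X) C ⊆ extImgs S := by
    intro P hP
    rcases hP with rfl | hP
    · exact Or.inl (Or.inr rfl)
    · exact hsub hP
  have hDchain : IsChain (· ⊆ ·) (insert (Set.univ : Set X) C) := by
    apply hchain.insert
    intro Q _ _
    exact Or.inr (Set.subset_univ Q)
  have := hmax _ hD hDchain (Set.subset_insert _ _)
  rw [← this]
  exact Set.mem_insert _ _

lemma height_singleton {X : Type*} (S : Set (X → X)) (x : X) :
    height S ({x} : Set X) = 0 := by
  unfold height
  have hset : {n : ℕ | ∃ l : List (Set X), l.length = n ∧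
      (∀ R ∈ l, R ∈ extImgs S ∧ nonSingleton R) ∧
      l.Chain' (SSubduction S) ∧ l.getLast? = some ({x} : Set X)} = ∅ := by
    ext n
    simp only [Set.mem_setOf_eq, Set.mem_empty_iff_false, iff_false]
    rintro ⟨l, hlen, hmem, hch, hlast⟩
    have hx : ({x} : Set X) ∈ l := List.mem_of_mem_getLast? hlast
    exact (hmem _ hx).2 ⟨x, rfl⟩
  rw [hset]
  exact csSup_empty

end Helpers

/-- the depth of the state of approximation at level `i` is at
least `i`. -/
theorem depth_alpha_ge {X : Type*} [Fintype X] [Nonempty X]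
    (S : Set (X → X)) (hS : ∀ s ∈ S, ∀ t ∈ S, (fun x => t (s x)) ∈ S)
    (C : Set (Set X)) (hC : IsMaxChainIn (extImgs S) C)
    (i : ℕ) (hi1 : 1 ≤ i) (hi2 : i ≤ height S (Set.univ : Set X)) :
    i ≤ depth S (alpha S C i) := by
  rcases Nat.lt_or_ge 1 i with hi | hi
  swap
  · -- i ≤ 1, so i = 1 and alpha = univ
    have h1 : i = 1 := le_antisymm hi hi1
    subst h1
    simp only [alpha, if_pos (le_refl 1), depth]
    omega
  -- main case: 2 ≤ i
  obtain ⟨hsub, hchain, hmax⟩ := hC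
  set Q : Set (Set X) := {Q | Q ∈ C ∧ ∀ P : Set X,
    (P ∈ C ∧ Q ⊂ P ∧ ∀ R ∈ C, Q ⊂ R → P ⊆ R) → depth S P < i} with hQdef
  have huniv : (Set.univ : Set X) ∈ C := univ_mem_maxchain ⟨hsub, hchain, hmax⟩
  have hQuniv : (Set.univ : Set X) ∈ Q := by
    refine ⟨huniv, fun P ⟨_, hP, _⟩ => absurd hP ?_⟩
    exact fun h => h.not_subset (Set.subset_univ P)
  have hQchain : IsChain (· ⊆ ·) Q := hchain.mono (fun P hP => hP.1)
  have hQfin : Q.Finite := Set.toFinite Q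
  obtain ⟨Q₀, hQ₀mem, hQ₀least⟩ := chain_exists_least hQfin hQchain ⟨_, hQuniv⟩
  have halpha : alpha S C i = Q₀ := by
    rw [alpha, if_neg (by omega)]
    refine Set.Subset.antisymm (Set.sInter_subset_of_mem hQ₀mem) (Set.subset_sInter ?_)
    exact fun P hP => hQ₀least P hP
  rw [halpha]
  -- C contains a singleton at the bottom
  have hCfin : C.Finite := Set.toFinite C
  obtain ⟨m, hm, hmleast⟩ := chain_exists_least hCfin hchain ⟨_, huniv⟩
  obtain ⟨x₀, hx₀⟩ := mem_extImgs_nonempty (hsub hm)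
  have hbot : ({x₀} : Set X) ∈ C := by
    have hD : insert ({x₀} : Set X) C ⊆ extImgs S := by
      intro P hP
      rcases hP with rfl | hP
      · exact Or.inr ⟨x₀, rfl⟩
      · exact hsub hP
    have hDchain : IsChain (· ⊆ ·) (insert ({x₀} : Set X) C) := by
      apply hchain.insert
      intro R hR _
      exact Or.inl ((Set.singleton_subset_iff.mpr hx₀).trans (hmleast R hR))
    have := hmax _ hD hDchain (Set.subset_insert _ _)
    rw [← this]
    exact Set.mem_insert _ _
  by_cases hsing : ∃ x : X, Q₀ = {x}
  · -- Q₀ is a singleton: depth = h(X) + 1 ≥ i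
    obtain ⟨x, rfl⟩ := hsing
    rw [depth, height_singleton]
    omega
  -- Q₀ nonsingleton: it has an immediate predecessor Q₁ in C
  have hQ₀C : Q₀ ∈ C := hQ₀mem.1
  have hbotlt : ({x₀} : Set X) ⊂ Q₀ := by
    rcases eq_or_ne ({x₀} : Set X) Q₀ with h | h
    · exact absurd ⟨x₀, h.symm⟩ hsing
    rcases hchain hbot hQ₀C h with h1 | h1
    · exact ⟨h1, fun hcon => h (Set.Subset.antisymm h1 hcon)⟩
    · -- Q₀ ⊆ {x₀} : then Q₀ is ∅ or {x₀}
      exfalso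
      obtain ⟨y, hy⟩ := mem_extImgs_nonempty (hsub hQ₀C)
      have : Q₀ = {x₀} := Set.Subset.antisymm h1 (by
        have hyx : y = x₀ := h1 hy
        subst hyx
        exact Set.singleton_subset_iff.mpr hy)
      exact hsing ⟨x₀, this⟩
  set T : Set (Set X) := {R | R ∈ C ∧ R ⊂ Q₀} with hTdef
  have hTchain : IsChain (· ⊆ ·) T := hchain.mono (fun P hP => hP.1)
  obtain ⟨Q₁, hQ₁mem, hQ₁great⟩ := chain_exists_greatest (Set.toFinite T) hTchain
    ⟨({x₀} : Set X), hbot, hbotlt⟩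
  have hQ₁C : Q₁ ∈ C := hQ₁mem.1
  have hQ₁lt : Q₁ ⊂ Q₀ := hQ₁mem.2
  -- Q₁ ∉ Q (else Q₀ ⊆ Q₁, contradiction)
  have hQ₁notin : Q₁ ∉ Q := fun h => hQ₁lt.not_subset (hQ₀least Q₁ h)
  have hfail : ¬ ∀ P : Set X,
      (P ∈ C ∧ Q₁ ⊂ P ∧ ∀ R ∈ C, Q₁ ⊂ R → P ⊆ R) → depth S P < i := by
    intro h
    exact hQ₁notin ⟨hQ₁C, h⟩
  push_neg at hfail
  obtain ⟨P, ⟨hPC, hQ₁P, hPmin⟩, hPd⟩ := hfail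
  -- P = Q₀
  have hPQ₀ : P = Q₀ := by
    have h1 : P ⊆ Q₀ := hPmin Q₀ hQ₀C hQ₁lt
    refine Set.Subset.antisymm h1 ?_
    by_contra hcon
    have hne : P ≠ Q₀ := fun h => hcon (h.ge)
    have : P ∈ T := ⟨hPC, ⟨h1, fun h => hne (Set.Subset.antisymm h1 h)⟩⟩
    exact hQ₁P.not_subset (hQ₁great P this)
  rw [hPQ₀] at hPd
  exact hPd


end Holonomy
end
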